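/- Let P be a Markov transition kernel on a Polish metric space (X, ψ, B) satisfying (B1), (B2), and (B3) (with Λ: X × X → [0,∞) satisfying Λ(x,y) ≥ (PV(x) + PV(y) + 1)/(V(x) + V(y) + 1)), and let π ∈ P_ψ(X) be the limit measure guaranteed by these conditions (i.e., W_ψ(δ_x Pⁿ, π) → 0 for every x). If P is weak Feller (i.e., Pf is bounded and continuous whenever f: X → ℝ is bounded and continuous), then π is the unique stationary distribution of P. -/

import Mathlib

open MeasureTheory ProbabilityTheory ENNReal Filter

/-- A coupling of two measures: a measure on the product with the given marginals. -/
def IsCoupling {X : Type*} [MeasurableSpace X] (υ : Measure (X × X)) (μ ν : Measure X) : Prop :=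
  υ.map Prod.fst = μ ∧ υ.map Prod.snd = ν

/-- The `L₁`-Wasserstein divergence `W_ψ` induced by the metric `ψ = dist` of `X`. -/
noncomputable def wassDist {X : Type*} [MeasurableSpace X] [PseudoMetricSpace X]
    (μ ν : Measure X) : ℝ≥0∞ :=
  ⨅ (υ : Measure (X × X)) (_ : IsProbabilityMeasure υ) (_ : IsCoupling υ μ ν),
    ∫⁻ p, ENNReal.ofReal (dist p.1 p.2) ∂υ

/-- The `n`-step evolution `μ Pⁿ` of a measure under a Markov transition kernel. -/
noncomputable def stepN {X : Type*} [MeasurableSpace X] (P : Kernel X X) :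
    ℕ → Measure X → Measure X
  | 0, μ => μ
  | n + 1, μ => (stepN P n μ).bind (fun x => P x)

/-- Membership in `P_ψ(X)`: `∫ ψ(x,·) dμ < ∞` for some `x`. -/
def memPpsi {X : Type*} [MeasurableSpace X] [PseudoMetricSpace X] (μ : Measure X) : Prop :=
  ∃ x : X, ∫⁻ y, ENNReal.ofReal (dist x y) ∂μ < ⊤

/-!
Bounded Lipschitz test functions are controlled by the Wasserstein divergence,
`|∫ f dμ - ∫ f dν| ≤ K W_ψ(μ, ν)`, so `δₓPⁿ → π` in `W_ψ` implies weak convergence. If `f` is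
bounded continuous, so is `Pf` by the Feller property, and
`∫ f d(πP) = ∫ Pf dπ = lim ∫ Pf d(δₓPⁿ) = lim ∫ f d(δₓPⁿ⁺¹) = ∫ f dπ`. A stationary `π'`
satisfies `∫ f dπ' = ∫ (∫ f d(δₓPⁿ)) π'(dx)` for all `n`, and the right-hand side tends to
`∫ f dπ` by dominated convergence.
-/

open BoundedContinuousFunction Topology

lemma isCoupling_prod {X : Type*} [MeasurableSpace X] (μ ν : Measure X) [IsProbabilityMeasure μ]
    [IsProbabilityMeasure ν] : IsCoupling (μ.prod ν) μ ν := by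
  constructor <;> simp

section Wasserstein

variable {X : Type*} [PseudoMetricSpace X] [SecondCountableTopology X] [MeasurableSpace X]
  [BorelSpace X]

lemma edist_integral_le_of_isCoupling {μ ν : Measure X} {υ : Measure (X × X)}
    [IsFiniteMeasure υ] (hυ : IsCoupling υ μ ν) {K : NNReal} {f : X →ᵇ ℝ}
    (hf : LipschitzWith K f) :
    edist (∫ x, f x ∂μ) (∫ x, f x ∂ν) ≤ K * ∫⁻ p, ENNReal.ofReal (dist p.1 p.2) ∂υ := by
  have h_sub : ∫ x, f x ∂μ - ∫ x, f x ∂ν = ∫ p, (f p.1 - f p.2) ∂υ := by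
    rw [← hυ.1, ← hυ.2, integral_map measurable_fst.aemeasurable
      f.continuous.aestronglyMeasurable, integral_map measurable_snd.aemeasurable
      f.continuous.aestronglyMeasurable, integral_sub]
    · exact (f.integrable _).comp_measurable measurable_fst
    · exact (f.integrable _).comp_measurable measurable_snd
  calc edist (∫ x, f x ∂μ) (∫ x, f x ∂ν)
      = ‖∫ p, (f p.1 - f p.2) ∂υ‖ₑ := by rw [edist_eq_enorm_sub, h_sub]
    _ ≤ ∫⁻ p, edist (f p.1) (f p.2) ∂υ := by
      simpa only [edist_eq_enorm_sub] using enorm_integral_le_lintegral_enorm _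
    _ ≤ ∫⁻ p, K * edist p.1 p.2 ∂υ := lintegral_mono fun p => hf p.1 p.2
    _ = K * ∫⁻ p, ENNReal.ofReal (dist p.1 p.2) ∂υ := by
      simp_rw [edist_dist]
      exact lintegral_const_mul _ (measurable_fst.dist measurable_snd).ennreal_ofReal

/-- The easy half of Kantorovich–Rubinstein duality. -/
lemma edist_integral_le_mul_wassDist (μ ν : Measure X) [IsProbabilityMeasure μ]
    [IsProbabilityMeasure ν] {K : NNReal} {f : X →ᵇ ℝ} (hf : LipschitzWith K f) :
    edist (∫ x, f x ∂μ) (∫ x, f x ∂ν) ≤ K * wassDist μ ν := by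
  rcases eq_or_ne K 0 with rfl | hK
  · simpa using edist_integral_le_of_isCoupling (isCoupling_prod μ ν) hf
  simp_rw [wassDist, ENNReal.mul_iInf_of_ne (ENNReal.coe_ne_zero.2 hK) ENNReal.coe_ne_top]
  exact le_iInf₂ fun υ _ => le_iInf fun hυ => edist_integral_le_of_isCoupling hυ hf

lemma tendsto_integral_of_tendsto_wassDist {μs : ℕ → Measure X} [∀ n, IsProbabilityMeasure (μs n)]
    {μ : Measure X} [IsProbabilityMeasure μ]
    (hμs : Tendsto (fun n => wassDist (μs n) μ) atTop (𝓝 0)) (f : X →ᵇ ℝ) :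
    Tendsto (fun n => ∫ x, f x ∂μs n) atTop (𝓝 (∫ x, f x ∂μ)) := by
  let νs : ℕ → ProbabilityMeasure X := fun n => ⟨μs n, inferInstance⟩
  suffices Tendsto νs atTop (𝓝 ⟨μ, inferInstance⟩) from
    ProbabilityMeasure.tendsto_iff_forall_integral_tendsto.1 this f
  refine tendsto_iff_forall_lipschitz_integral_tendsto.2 fun g hg_bdd ⟨K, hg⟩ => ?_
  let g' : X →ᵇ ℝ := ⟨⟨g, hg.continuous⟩, hg_bdd⟩
  have hg' : LipschitzWith K g' := hg
  have h_bound := fun n => edist_integral_le_mul_wassDist (μs n) μ hg'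
  have h_lim : Tendsto (fun n => (K : ℝ≥0∞) * wassDist (μs n) μ) atTop (𝓝 0) := by
    simpa using ENNReal.Tendsto.const_mul hμs (Or.inr ENNReal.coe_ne_top)
  exact tendsto_iff_edist_tendsto_0.2 <|
    tendsto_of_tendsto_of_tendsto_of_le_of_le tendsto_const_nhds h_lim (fun _ => zero_le) h_bound

end Wasserstein

section Markov

variable {X : Type*} [MeasurableSpace X]

lemma ProbabilityTheory.Kernel.pow_succ_eq_comp (P : Kernel X X) (n : ℕ) :
    P ^ (n + 1) = P ∘ₖ (P ^ n) :=
  pow_succ' P n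

instance ProbabilityTheory.Kernel.isMarkovKernel_pow (P : Kernel X X) [IsMarkovKernel P] (n : ℕ) :
    IsMarkovKernel (P ^ n) := by
  induction n with
  | zero => exact inferInstanceAs (IsMarkovKernel Kernel.id)
  | succ n ih => rw [Kernel.pow_succ_eq_comp]; infer_instance

lemma stepN_eq_comp_pow (P : Kernel X X) (n : ℕ) (μ : Measure X) : stepN P n μ = (P ^ n) ∘ₘ μ := by
  induction n with
  | zero => exact Measure.id_comp.symm
  | succ n ih =>
    change P ∘ₘ stepN P n μ = _
    rw [ih, Measure.comp_assoc, Kernel.pow_succ_eq_comp]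

lemma stepN_dirac (P : Kernel X X) (n : ℕ) (x : X) : stepN P n (Measure.dirac x) = (P ^ n) x := by
  rw [stepN_eq_comp_pow, Measure.dirac_bind (Kernel.measurable _)]

end Markov

lemma MeasureTheory.Measure.integral_comp {α β E : Type*} [MeasurableSpace α] [MeasurableSpace β]
    [NormedAddCommGroup E] [NormedSpace ℝ E] {κ : Kernel α β} {μ : Measure α} {f : β → E}
    (hf : Integrable f (κ ∘ₘ μ)) : ∫ y, f y ∂(κ ∘ₘ μ) = ∫ x, ∫ y, f y ∂κ x ∂μ := by
  rw [Measure.comp_eq_comp_const_apply] at hf ⊢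
  rw [Kernel.integral_comp hf, Kernel.const_apply]

section Stationary

variable {X : Type*} [TopologicalSpace X] [HasOuterApproxClosed X] [MeasurableSpace X]
  [BorelSpace X] {P : Kernel X X} [IsMarkovKernel P] {π : Measure X} [IsProbabilityMeasure π]

lemma comp_eq_self_of_tendsto_integral_pow
    (hP : ∀ f : X →ᵇ ℝ, Continuous fun x => ∫ y, f y ∂P x) {x₀ : X}
    (hlim : ∀ f : X →ᵇ ℝ, Tendsto (fun n => ∫ y, f y ∂(P ^ n) x₀) atTop (𝓝 (∫ y, f y ∂π))) :
    P ∘ₘ π = π := by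
  refine ext_of_forall_integral_eq_of_IsFiniteMeasure fun f => ?_
  let Pf : X →ᵇ ℝ := .ofNormedAddCommGroup _ (hP f) ‖f‖ fun x => f.norm_integral_le_norm (P x)
  have h_succ : ∀ n, ∫ y, f y ∂(P ^ (n + 1)) x₀ = ∫ x, Pf x ∂(P ^ n) x₀ := fun n => by
    rw [Kernel.pow_succ_eq_comp, Kernel.integral_comp (f.integrable _)]
    rfl
  rw [Measure.integral_comp (f.integrable _)]
  refine tendsto_nhds_unique ?_ ((hlim f).comp (tendsto_add_atTop_nat 1))
  have h_Pf := hlim Pf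
  simp only [← h_succ] at h_Pf
  exact h_Pf

lemma eq_of_comp_eq_self_of_tendsto_integral_pow
    (hlim : ∀ x (f : X →ᵇ ℝ), Tendsto (fun n => ∫ y, f y ∂(P ^ n) x) atTop (𝓝 (∫ y, f y ∂π)))
    {π' : Measure X} [IsProbabilityMeasure π'] (hπ' : P ∘ₘ π' = π') : π' = π := by
  have h_pow : ∀ n : ℕ, (P ^ n) ∘ₘ π' = π' := fun n => by
    induction n with
    | zero => exact Measure.id_comp
    | succ n ih => rw [Kernel.pow_succ_eq_comp, ← Measure.comp_assoc, ih, hπ']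
  refine ext_of_forall_integral_eq_of_IsFiniteMeasure fun f => ?_
  have h_eq : ∀ n, ∫ x, ∫ y, f y ∂(P ^ n) x ∂π' = ∫ y, f y ∂π' := fun n => by
    rw [← Measure.integral_comp (f.integrable _), h_pow]
  have h_dct : Tendsto (fun n => ∫ x, ∫ y, f y ∂(P ^ n) x ∂π') atTop
      (𝓝 (∫ _, ∫ y, f y ∂π ∂π')) :=
    tendsto_integral_of_dominated_convergence (fun _ => ‖f‖)
      (fun _ => f.continuous.stronglyMeasurable.integral_kernel.aestronglyMeasurable)
      (integrable_const _) (fun _ => ae_of_all _ fun _ => f.norm_integral_le_norm _)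
      (ae_of_all _ fun x => hlim x f)
  simp only [h_eq, integral_const, probReal_univ, one_smul] at h_dct
  exact tendsto_nhds_unique tendsto_const_nhds h_dct

end Stationary

theorem stmt3_general {X : Type*} [MetricSpace X] [SecondCountableTopology X]
    [MeasurableSpace X] [BorelSpace X]
    (P : Kernel X X) [IsMarkovKernel P]
    -- the limit measure π
    (π : Measure X) (hπ : IsProbabilityMeasure π)
    (hπlim : ∀ x : X,
      Tendsto (fun n : ℕ => wassDist (stepN P n (Measure.dirac x)) π) atTop (nhds 0))
    -- P is weak Feller: Pf is bounded continuous whenever f is bounded continuous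
    (hFeller : ∀ f : X → ℝ, Continuous f → (∃ M : ℝ, ∀ x, |f x| ≤ M) →
      Continuous (fun x => ∫ y, f y ∂(P x)) ∧ ∃ M : ℝ, ∀ x, |∫ y, f y ∂(P x)| ≤ M) :
    π.bind (fun x => P x) = π ∧
      ∀ π' : Measure X, IsProbabilityMeasure π' → π'.bind (fun x => P x) = π' → π' = π := by
  have hlim : ∀ x (f : X →ᵇ ℝ), Tendsto (fun n => ∫ y, f y ∂(P ^ n) x) atTop (𝓝 (∫ y, f y ∂π)) :=
    fun x => tendsto_integral_of_tendsto_wassDist (by simpa only [stepN_dirac] using hπlim x)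
  have hP : ∀ f : X →ᵇ ℝ, Continuous fun x => ∫ y, f y ∂P x := fun f =>
    (hFeller f f.continuous ⟨‖f‖, f.norm_coe_le_norm⟩).1
  obtain ⟨x₀⟩ := nonempty_of_isProbabilityMeasure π
  exact ⟨comp_eq_self_of_tendsto_integral_pow hP (hlim x₀),
    fun π' _ hπ' => eq_of_comp_eq_self_of_tendsto_integral_pow hlim hπ'⟩

/-- Proposition 1, weak Feller case. Under (B1)-(B3), if `P` is weak Feller,
then the limit measure `π` is the unique stationary distribution of `P`. -/
theorem stmt3 {X : Type*} [MetricSpace X] [CompleteSpace X] [SecondCountableTopology X]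
    [MeasurableSpace X] [BorelSpace X]
    (P : Kernel X X) [IsMarkovKernel P]
    -- (B1)
    (V : X → ℝ) (hVmeas : Measurable V) (hV0 : ∀ x, 0 ≤ V x)
    (a : ℝ) (ha : 0 < a)
    (hB1 : ∀ x y : X, a⁻¹ * dist x y ≤ V x + V y + 1)
    (hPVfin : ∀ x : X, Integrable V (P x))
    -- (B2)
    (Γ : X → X → ℝ) (hΓmeas : Measurable (Function.uncurry Γ)) (hΓ0 : ∀ x y, 0 ≤ Γ x y)
    (hB2 : ∀ x y : X, wassDist (P x) (P y) ≤ ENNReal.ofReal (Γ x y * dist x y))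
    -- the function Λ
    (Λ : X → X → ℝ) (hΛ0 : ∀ x y, 0 ≤ Λ x y)
    (hΛ : ∀ x y : X,
      ((∫ z, V z ∂(P x)) + (∫ z, V z ∂(P y)) + 1) / (V x + V y + 1) ≤ Λ x y)
    -- (B3)
    (hB3 : ∃ r ρ : ℝ, 0 < r ∧ r < 1 ∧
      IsLUB (Set.range fun p : X × X => Γ p.1 p.2 ^ r * Λ p.1 p.2 ^ (1 - r)) ρ ∧ ρ < 1)
    -- the limit measure π
    (π : Measure X) (hπ : IsProbabilityMeasure π) (hπψ : memPpsi π)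
    (hπlim : ∀ x : X,
      Tendsto (fun n : ℕ => wassDist (stepN P n (Measure.dirac x)) π) atTop (nhds 0))
    -- P is weak Feller: Pf is bounded continuous whenever f is bounded continuous
    (hFeller : ∀ f : X → ℝ, Continuous f → (∃ M : ℝ, ∀ x, |f x| ≤ M) →
      Continuous (fun x => ∫ y, f y ∂(P x)) ∧ ∃ M : ℝ, ∀ x, |∫ y, f y ∂(P x)| ≤ M) :
    π.bind (fun x => P x) = π ∧
      ∀ π' : Measure X, IsProbabilityMeasure π' → π'.bind (fun x => P x) = π' → π' = π :=
  stmt3_general P π hπ hπlim hFeller
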